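/- For every real number s and every positive integer x, ∑_{i=1}^{x} (μ(i)/i^s) · ∑_{j=x+1}^{x²} (μ(j)/j^s) · H_{⌊x²/(i·j)⌋}(s) = M_{x}(s) − ∑_{i=1}^{x} ∑_{j=1}^{x} (μ(i)·μ(j)/(i·j)^s) · H_{⌊x²/(i·j)⌋}(s). -/

import Mathlib

open Finset ArithmeticFunction

/-- Generalized oscillatory number in power `s`: `M_n(s) = ∑_{k=1}^{n} μ(k)/k^s`. -/
noncomputable def Mgen (s : ℝ) (n : ℕ) : ℝ :=
  ∑ k ∈ Finset.Icc 1 n, (moebius k : ℝ) / (k : ℝ) ^ s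

/-- Generalized harmonic number in power `s`: `H_n(s) = ∑_{k=1}^{n} 1/k^s`. -/
noncomputable def Hgen (s : ℝ) (n : ℕ) : ℝ :=
  ∑ k ∈ Finset.Icc 1 n, 1 / (k : ℝ) ^ s

/-!
Weighting by `n ↦ n ^ (-s)` is compatible with Dirichlet convolution, so `μ * ζ = 1` gives
`∑_{j ≤ n} μ(j) j^{-s} H_{⌊n/j⌋}(s) = 1` for every `n ≥ 1`. Applied with `n = ⌊x²/i⌋` for
`i ≤ x` (the terms with `j > ⌊x²/i⌋` vanish because `H_0 = 0`), the sum over `j ≤ x²` is `1`;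
splitting it at `j = x` and summing against `μ(i) i^{-s}` over `i ≤ x` gives the identity.
-/

namespace ArithmeticFunction

theorem pmul_mul_pmul_of_map_mul {R : Type*} [CommSemiring R] (f g w : ArithmeticFunction R)
    (hw : ∀ a b, w (a * b) = w a * w b) : f.pmul w * g.pmul w = (f * g).pmul w := by
  ext n
  simp only [mul_apply, pmul_apply, sum_mul]
  refine sum_congr rfl fun p hp => ?_
  rw [← (Nat.mem_divisorsAntidiagonal.mp hp).1, hw]
  ring

/-- `n ↦ n ^ (-s)`; the `if` is needed because `1 / 0 ^ 0 = 1`. -/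
noncomputable def rpowNeg (s : ℝ) : ArithmeticFunction ℝ :=
  ⟨fun n => if n = 0 then 0 else 1 / (n : ℝ) ^ s, if_pos rfl⟩

theorem rpowNeg_apply_of_ne_zero (s : ℝ) {n : ℕ} (hn : n ≠ 0) :
    rpowNeg s n = 1 / (n : ℝ) ^ s :=
  if_neg hn

theorem rpowNeg_map_mul (s : ℝ) (a b : ℕ) : rpowNeg s (a * b) = rpowNeg s a * rpowNeg s b := by
  rcases eq_or_ne a 0 with rfl | ha
  · simp [rpowNeg]
  rcases eq_or_ne b 0 with rfl | hb
  · simp [rpowNeg]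
  rw [rpowNeg_apply_of_ne_zero s ha, rpowNeg_apply_of_ne_zero s hb,
    rpowNeg_apply_of_ne_zero s (mul_ne_zero ha hb), Nat.cast_mul,
    Real.mul_rpow (Nat.cast_nonneg a) (Nat.cast_nonneg b), one_div_mul_one_div]

end ArithmeticFunction

theorem Icc_one_eq_Ioc_zero (n : ℕ) : Icc 1 n = Ioc 0 n :=
  Icc_succ_left_eq_Ioc 0 n

theorem Hgen_eq_sum_rpowNeg (s : ℝ) (n : ℕ) : Hgen s n = ∑ k ∈ Ioc 0 n, rpowNeg s k := by
  rw [Hgen, Icc_one_eq_Ioc_zero]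
  exact sum_congr rfl fun k hk => (rpowNeg_apply_of_ne_zero s (mem_Ioc.mp hk).1.ne').symm

theorem sum_moebius_div_rpow_mul_Hgen_div (s : ℝ) {n : ℕ} (hn : 0 < n) :
    ∑ j ∈ Icc 1 n, (moebius j : ℝ) / (j : ℝ) ^ s * Hgen s (n / j) = 1 := by
  have hconv : (moebius : ArithmeticFunction ℝ).pmul (rpowNeg s) *
      (zeta : ArithmeticFunction ℝ).pmul (rpowNeg s) =
        (1 : ArithmeticFunction ℝ).pmul (rpowNeg s) := by
    rw [pmul_mul_pmul_of_map_mul _ _ _ (rpowNeg_map_mul s), coe_moebius_mul_coe_zeta]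
  calc _ = ∑ m ∈ Ioc 0 n, (1 : ArithmeticFunction ℝ).pmul (rpowNeg s) m := by
        rw [← hconv, sum_Ioc_mul_eq_sum_sum, Icc_one_eq_Ioc_zero]
        refine sum_congr rfl fun j hj => ?_
        rw [zeta_pmul, Hgen_eq_sum_rpowNeg, pmul_apply, intCoe_apply,
          rpowNeg_apply_of_ne_zero s (mem_Ioc.mp hj).1.ne', mul_one_div]
    _ = 1 := by
        rw [sum_eq_single_of_mem 1 (mem_Ioc.mpr ⟨one_pos, hn⟩)]
        · simp [pmul_apply, rpowNeg_apply_of_ne_zero]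
        · intro m _ hm
          simp [pmul_apply, one_apply_ne hm]

theorem sum_moebius_div_rpow_mul_Hgen_div_mul (s : ℝ) {N i : ℕ} (hi : 0 < i) (hiN : i ≤ N) :
    ∑ j ∈ Icc 1 N, (moebius j : ℝ) / (j : ℝ) ^ s * Hgen s (N / (i * j)) = 1 := by
  simp_rw [← Nat.div_div_eq_div_mul]
  rw [← sum_subset (Icc_subset_Icc_right (Nat.div_le_self N i))]
  · exact sum_moebius_div_rpow_mul_Hgen_div s ((Nat.one_le_div_iff hi).mpr hiN)
  · intro j hj hj'
    have : N / i / j = 0 := Nat.div_eq_of_lt (by simp at hj hj'; omega)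
    simp [this, Hgen]

theorem stmt_10_general (s : ℝ) (x : ℕ) :
    ∑ i ∈ Finset.Icc 1 x, ((moebius i : ℝ) / (i : ℝ) ^ s) *
      ∑ j ∈ Finset.Icc (x + 1) (x ^ 2), ((moebius j : ℝ) / (j : ℝ) ^ s) *
        Hgen s (x ^ 2 / (i * j)) =
    Mgen s x -
      ∑ i ∈ Finset.Icc 1 x, ∑ j ∈ Finset.Icc 1 x,
        ((moebius i : ℝ) * (moebius j : ℝ) / ((i : ℝ) * (j : ℝ)) ^ s) *
          Hgen s (x ^ 2 / (i * j)) := by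
  have hx : x ≤ x ^ 2 := Nat.le_self_pow two_ne_zero x
  have htail : ∀ i ∈ Icc 1 x,
      ∑ j ∈ Icc (x + 1) (x ^ 2), (moebius j : ℝ) / (j : ℝ) ^ s * Hgen s (x ^ 2 / (i * j))
        = 1 - ∑ j ∈ Icc 1 x, (moebius j : ℝ) / (j : ℝ) ^ s * Hgen s (x ^ 2 / (i * j)) := by
    intro i hi
    obtain ⟨hi1, hix⟩ := mem_Icc.mp hi
    rw [← sum_moebius_div_rpow_mul_Hgen_div_mul s hi1 (hix.trans hx), eq_sub_iff_add_eq',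
      Icc_add_one_left_eq_Ioc, Icc_one_eq_Ioc_zero, Icc_one_eq_Ioc_zero]
    exact sum_Ioc_consecutive _ (Nat.zero_le x) hx
  rw [sum_congr rfl fun i hi => by rw [htail i hi], Mgen]
  simp_rw [mul_sub, mul_one, sum_sub_distrib, mul_sum]
  congr 1
  refine sum_congr rfl fun i _ => sum_congr rfl fun j _ => ?_
  rw [Real.mul_rpow (Nat.cast_nonneg i) (Nat.cast_nonneg j)]
  ring

theorem stmt_10 (s : ℝ) (x : ℕ) (hx : 0 < x) :
    ∑ i ∈ Finset.Icc 1 x, ((moebius i : ℝ) / (i : ℝ) ^ s) *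
      ∑ j ∈ Finset.Icc (x + 1) (x ^ 2), ((moebius j : ℝ) / (j : ℝ) ^ s) *
        Hgen s (x ^ 2 / (i * j)) =
    Mgen s x -
      ∑ i ∈ Finset.Icc 1 x, ∑ j ∈ Finset.Icc 1 x,
        ((moebius i : ℝ) * (moebius j : ℝ) / ((i : ℝ) * (j : ℝ)) ^ s) *
          Hgen s (x ^ 2 / (i * j)) :=
  stmt_10_general s x
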